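/- Let A and B be n×n complex matrices. Then for every real t > 0, 2·‖A+B‖_F² ≤ (2+t)·tr(|A|² + |B|²) + (1/t)·tr(|A||B| + |B||A|). -/

import Mathlib

/-!
Since `‖A + B‖_F² = tr |A|² + tr |B|² + 2 Re tr (Aᴴ B)`, taking `s = 1/t` it suffices to show
`4 s Re tr (Aᴴ B) ≤ 2 s² tr (|A| |B|) + tr |A|² + tr |B|²` for all real `s`.
Write `Aᴴ B = |A| Z |B|` with `Z = |A|⁻¹ Aᴴ B |B|⁻¹`. The AM–GM inequality
`2 s Re tr (Xᴴ Y) ≤ s² tr (Xᴴ X) + tr (Yᴴ Y)` for `X = |A|^½ |B|^½` and `Y = |A|^½ Z |B|^½`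
bounds `2 s Re tr (Aᴴ B)` by `s² tr (|A| |B|) + tr (R R')`, where `R = A |A|⁻¹ Aᴴ` and
`R' = B |B|⁻¹ Bᴴ`. AM–GM once more gives `2 tr (R R') ≤ tr R² + tr R'²`, and `tr R² ≤ tr |A|²`
because `|A| |A|⁻¹ |A| ≤ |A|`. So that the inverses exist, `|A|` and `|B|` are first replaced by
`|A| + ε` and `|B| + ε`, and then `ε → 0`.
-/

open scoped Matrix ComplexOrder

/-- The absolute value `|A| := (A*A)^{1/2}` of a square complex matrix, i.e. the (unique)
positive semidefinite square root of `Aᴴ * A`. -/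
noncomputable def matrixAbs {n : ℕ} (A : Matrix (Fin n) (Fin n) ℂ) :
    Matrix (Fin n) (Fin n) ℂ :=
  ((Matrix.posSemidef_conjTranspose_mul_self A).1.eigenvectorUnitary : Matrix (Fin n) (Fin n) ℂ) *
    Matrix.diagonal ((↑) ∘ Real.sqrt ∘ (Matrix.posSemidef_conjTranspose_mul_self A).1.eigenvalues) *
    (star ((Matrix.posSemidef_conjTranspose_mul_self A).1.eigenvectorUnitary : Matrix (Fin n) (Fin n) ℂ))

/-- The Frobenius norm `‖A‖_F = (tr |A|²)^{1/2}` of a square complex matrix. -/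
noncomputable def frobeniusNorm' {n : ℕ} (A : Matrix (Fin n) (Fin n) ℂ) : ℝ :=
  Real.sqrt ((matrixAbs A ^ 2).trace.re)

open scoped MatrixOrder

namespace Matrix

variable {𝕜 ι : Type*} [RCLike 𝕜]

lemma PosSemidef.add_smul_one_posDef [DecidableEq ι] {P : Matrix ι ι 𝕜} (hP : P.PosSemidef)
    {ε : ℝ} (hε : 0 < ε) : (P + ε • 1).PosDef :=
  PosDef.posSemidef_add hP (PosDef.one.smul hε)

variable [Fintype ι]

lemma re_trace_conjTranspose_mul_self_nonneg (X : Matrix ι ι 𝕜) :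
    0 ≤ RCLike.re (Xᴴ * X).trace :=
  (RCLike.nonneg_iff.mp (posSemidef_conjTranspose_mul_self X).trace_nonneg).1

lemma re_trace_conjTranspose_mul_comm (X Y : Matrix ι ι 𝕜) :
    RCLike.re (Yᴴ * X).trace = RCLike.re (Xᴴ * Y).trace := by
  rw [← conjTranspose_conjTranspose X, ← conjTranspose_mul, trace_conjTranspose,
    conjTranspose_conjTranspose, RCLike.star_def, RCLike.conj_re]

lemma two_mul_re_trace_conjTranspose_mul_le (X Y : Matrix ι ι 𝕜) (s : ℝ) :
    2 * s * RCLike.re (Xᴴ * Y).trace ≤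
      s ^ 2 * RCLike.re (Xᴴ * X).trace + RCLike.re (Yᴴ * Y).trace := by
  have h := re_trace_conjTranspose_mul_self_nonneg ((s : 𝕜) • X - Y)
  simp only [conjTranspose_sub, conjTranspose_smul, RCLike.star_def, RCLike.conj_ofReal,
    sub_mul, mul_sub, smul_mul, Matrix.mul_smul, smul_smul, trace_sub, trace_smul, smul_eq_mul,
    map_sub, ← RCLike.ofReal_mul, RCLike.re_ofReal_mul, re_trace_conjTranspose_mul_comm X Y] at h
  nlinarith

lemma trace_mul_mul_conjTranspose_sq {A P : Matrix ι ι 𝕜} (hPA : P * P = Aᴴ * A)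
    (W : Matrix ι ι 𝕜) :
    (A * W * Aᴴ * (A * W * Aᴴ)).trace = (P * W * P * (P * W * P)).trace := by
  have h : ∀ X Y : Matrix ι ι 𝕜,
      (X * W * Y * (X * W * Y)).trace = (W * (Y * X) * W * (Y * X)).trace := fun X Y => by
    simp only [Matrix.mul_assoc]; rw [trace_mul_comm X]; simp only [Matrix.mul_assoc]
  rw [h, h, hPA]

variable [DecidableEq ι]

lemma PosSemidef.trace_mul_nonneg {M N : Matrix ι ι 𝕜} (hM : M.PosSemidef) (hN : N.PosSemidef) :
    0 ≤ (M * N).trace := by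
  set S := CFC.sqrt M
  have hS : S.PosSemidef := nonneg_iff_posSemidef.mp (CFC.sqrt_nonneg M)
  have hSS : S * S = M := CFC.sqrt_mul_sqrt_self M hM.nonneg
  have h : (S * S * N).trace = (Sᴴ * N * S).trace := by
    rw [hS.isHermitian.eq, Matrix.mul_assoc, trace_mul_comm, Matrix.mul_assoc]
  rw [← hSS, h]
  exact (hN.conjTranspose_mul_mul_same S).trace_nonneg

lemma PosSemidef.trace_mul_self_le {M N : Matrix ι ι 𝕜} (hM : M.PosSemidef) (hMN : M ≤ N) :
    (M * M).trace ≤ (N * N).trace := by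
  have hNM : (N - M).PosSemidef := hMN
  have hN : N.PosSemidef := by simpa using hM.add hNM
  have key : N * N - M * M = (N - M) * N + M * (N - M) := by noncomm_ring
  rw [← sub_nonneg, ← trace_sub, key, trace_add]
  exact add_nonneg (hNM.trace_mul_nonneg hN) (hM.trace_mul_nonneg hNM)

lemma PosSemidef.mul_inv_add_smul_one_mul_le {P : Matrix ι ι 𝕜} (hP : P.PosSemidef) {ε : ℝ}
    (hε : 0 < ε) : P * (P + ε • 1)⁻¹ * P ≤ P := by
  set D := P + ε • (1 : Matrix ι ι 𝕜)
  have hD : D.PosDef := hP.add_smul_one_posDef hε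
  have hDdet : IsUnit D.det := (isUnit_iff_isUnit_det D).mp hD.isUnit
  have hDP : (D * P).PosSemidef := by
    rw [add_mul, smul_mul, Matrix.one_mul]
    nth_rewrite 1 [← hP.isHermitian.eq]
    exact (posSemidef_conjTranspose_mul_self P).add (hP.smul hε.le)
  -- `P - P D⁻¹ P = P D⁻¹ (D - P) = ε P D⁻¹ = ε D⁻¹ (D P) D⁻¹`
  have e : P - P * D⁻¹ * P = ε • (D⁻¹ᴴ * (D * P) * D⁻¹) := by
    rw [hD.inv.isHermitian.eq, nonsing_inv_mul_cancel_left D P hDdet]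
    nth_rewrite 1 [← nonsing_inv_mul_cancel_right D P hDdet]
    simp only [D, Matrix.mul_add, Matrix.mul_smul, Matrix.mul_one]
    abel
  rw [le_iff, e]
  exact (hDP.conjTranspose_mul_mul_same _).smul hε.le

lemma re_trace_sq_mul_inv_mul_conjTranspose_le {A P : Matrix ι ι 𝕜} (hP : P.PosSemidef)
    (hPA : P * P = Aᴴ * A) {ε : ℝ} (hε : 0 < ε) :
    RCLike.re (A * (P + ε • 1)⁻¹ * Aᴴ * (A * (P + ε • 1)⁻¹ * Aᴴ)).trace ≤
      RCLike.re (Aᴴ * A).trace := by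
  have hPDP : (P * (P + ε • 1)⁻¹ * P).PosSemidef := by
    simpa only [hP.isHermitian.eq] using
      (hP.add_smul_one_posDef hε).inv.posSemidef.conjTranspose_mul_mul_same P
  rw [trace_mul_mul_conjTranspose_sq hPA, ← hPA]
  exact (RCLike.le_iff_re_im.mp (hPDP.trace_mul_self_le (hP.mul_inv_add_smul_one_mul_le hε))).1

lemma PosSemidef.two_mul_re_trace_mul_mul_le {M N : Matrix ι ι 𝕜} (hM : M.PosSemidef)
    (hN : N.PosSemidef) (Z : Matrix ι ι 𝕜) (s : ℝ) :
    2 * s * RCLike.re (M * Z * N).trace ≤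
      s ^ 2 * RCLike.re (M * N).trace + RCLike.re (Zᴴ * M * Z * N).trace := by
  set S := CFC.sqrt M
  set T := CFC.sqrt N
  have hS : Sᴴ = S := (nonneg_iff_posSemidef.mp (CFC.sqrt_nonneg M)).isHermitian.eq
  have hT : Tᴴ = T := (nonneg_iff_posSemidef.mp (CFC.sqrt_nonneg N)).isHermitian.eq
  have hSS : S * S = M := CFC.sqrt_mul_sqrt_self M hM.nonneg
  have hTT : T * T = N := CFC.sqrt_mul_sqrt_self N hN.nonneg
  have h : ∀ X : Matrix ι ι 𝕜, (T * X * T).trace = (X * N).trace := fun X => by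
    rw [trace_mul_cycle, ← hTT, trace_mul_comm]
  have hXY : ((S * T)ᴴ * (S * Z * T)).trace = (M * Z * N).trace := by
    rw [conjTranspose_mul, hS, hT, ← h, ← hSS]; simp only [Matrix.mul_assoc]
  have hXX : ((S * T)ᴴ * (S * T)).trace = (M * N).trace := by
    rw [conjTranspose_mul, hS, hT, ← h, ← hSS]; simp only [Matrix.mul_assoc]
  have hYY : ((S * Z * T)ᴴ * (S * Z * T)).trace = (Zᴴ * M * Z * N).trace := by
    rw [conjTranspose_mul, conjTranspose_mul, hS, hT, ← h, ← hSS]; simp only [Matrix.mul_assoc]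
  simpa only [hXY, hXX, hYY] using two_mul_re_trace_conjTranspose_mul_le (S * T) (S * Z * T) s

lemma four_mul_re_trace_conjTranspose_mul_le_add_smul_one {A B P Q : Matrix ι ι 𝕜}
    (hP : P.PosSemidef) (hQ : Q.PosSemidef) (hPA : P * P = Aᴴ * A) (hQB : Q * Q = Bᴴ * B)
    (s : ℝ) {ε : ℝ} (hε : 0 < ε) :
    4 * s * RCLike.re (Aᴴ * B).trace ≤
      2 * s ^ 2 * RCLike.re ((P + ε • 1) * (Q + ε • 1)).trace + RCLike.re (Aᴴ * A).trace +
        RCLike.re (Bᴴ * B).trace := by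
  set Pε := P + ε • (1 : Matrix ι ι 𝕜)
  set Qε := Q + ε • (1 : Matrix ι ι 𝕜)
  have hPε : Pε.PosDef := hP.add_smul_one_posDef hε
  have hQε : Qε.PosDef := hQ.add_smul_one_posDef hε
  have hPdet : IsUnit Pε.det := (isUnit_iff_isUnit_det Pε).mp hPε.isUnit
  have hQdet : IsUnit Qε.det := (isUnit_iff_isUnit_det Qε).mp hQε.isUnit
  set Z := Pε⁻¹ * (Aᴴ * B) * Qε⁻¹
  set R := A * Pε⁻¹ * Aᴴ
  set R' := B * Qε⁻¹ * Bᴴ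
  have hZ : Pε * Z * Qε = Aᴴ * B := by
    simp only [Z, Matrix.mul_assoc, nonsing_inv_mul _ hQdet, mul_nonsing_inv_cancel_left _ _ hPdet,
      Matrix.mul_one]
  have hZR : (Zᴴ * Pε * Z * Qε).trace = (R * R').trace :=
    calc (Zᴴ * Pε * Z * Qε).trace = (Qε⁻¹ * (Bᴴ * (R * B))).trace := by
          simp only [Z, R, conjTranspose_mul, conjTranspose_conjTranspose, hPε.inv.isHermitian.eq,
            hQε.inv.isHermitian.eq, Matrix.mul_assoc, nonsing_inv_mul_cancel_left _ _ hPdet,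
            nonsing_inv_mul _ hQdet, Matrix.mul_one]
      _ = (R * R').trace := by
          rw [trace_mul_comm, Matrix.mul_assoc, trace_mul_comm]; simp only [R', Matrix.mul_assoc]
  have hR : Rᴴ = R := by
    simp only [R, conjTranspose_mul, conjTranspose_conjTranspose, hPε.inv.isHermitian.eq,
      Matrix.mul_assoc]
  have hR' : R'ᴴ = R' := by
    simp only [R', conjTranspose_mul, conjTranspose_conjTranspose, hQε.inv.isHermitian.eq,
      Matrix.mul_assoc]
  have hAB := hPε.posSemidef.two_mul_re_trace_mul_mul_le hQε.posSemidef Z s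
  rw [hZ, hZR] at hAB
  have hRR' := two_mul_re_trace_conjTranspose_mul_le R R' 1
  rw [hR, hR'] at hRR'
  have hRA := re_trace_sq_mul_inv_mul_conjTranspose_le hP hPA hε
  have hRB := re_trace_sq_mul_inv_mul_conjTranspose_le hQ hQB hε
  linarith

open Filter Topology in
lemma four_mul_re_trace_conjTranspose_mul_le {A B P Q : Matrix ι ι 𝕜}
    (hP : P.PosSemidef) (hQ : Q.PosSemidef) (hPA : P * P = Aᴴ * A) (hQB : Q * Q = Bᴴ * B)
    (s : ℝ) :
    4 * s * RCLike.re (Aᴴ * B).trace ≤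
      2 * s ^ 2 * RCLike.re (P * Q).trace + RCLike.re (Aᴴ * A).trace +
        RCLike.re (Bᴴ * B).trace := by
  let f : ℝ → ℝ := fun ε => 2 * s ^ 2 * RCLike.re ((P + ε • 1) * (Q + ε • 1)).trace +
    RCLike.re (Aᴴ * A).trace + RCLike.re (Bᴴ * B).trace
  have hf : Tendsto f (𝓝[>] 0) (𝓝 (f 0)) := (show Continuous f by fun_prop).continuousWithinAt
  simp only [f, zero_smul, add_zero] at hf
  refine ge_of_tendsto hf (eventually_nhdsWithin_of_forall fun ε hε => ?_)
  exact four_mul_re_trace_conjTranspose_mul_le_add_smul_one hP hQ hPA hQB s hε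

end Matrix

open Matrix

lemma matrixAbs_eq_cfcAbs {n : ℕ} (A : Matrix (Fin n) (Fin n) ℂ) : matrixAbs A = CFC.abs A := by
  rw [CFC.abs, CFC.sqrt_eq_real_sqrt _ (star_mul_self_nonneg A), star_eq_conjTranspose,
    cfcₙ_eq_cfc, (posSemidef_conjTranspose_mul_self A).1.cfc_eq]
  rfl

/-- For all `n × n` complex matrices `A, B` and every real `t > 0`,
`2·‖A+B‖_F² ≤ (2+t)·tr(|A|² + |B|²) + (1/t)·tr(|A||B| + |B||A|)`. -/
theorem two_mul_sq_frobenius_norm_add_le {n : ℕ} (A B : Matrix (Fin n) (Fin n) ℂ)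
    (t : ℝ) (ht : 0 < t) :
    2 * frobeniusNorm' (A + B) ^ 2 ≤
      (2 + t) * (matrixAbs A ^ 2 + matrixAbs B ^ 2).trace.re +
        (1 / t) * (matrixAbs A * matrixAbs B + matrixAbs B * matrixAbs A).trace.re := by
  have hsq (X : Matrix (Fin n) (Fin n) ℂ) : matrixAbs X ^ 2 = Xᴴ * X := by
    rw [matrixAbs_eq_cfcAbs, CFC.abs_sq, star_eq_conjTranspose]
  have hpsd (X : Matrix (Fin n) (Fin n) ℂ) : (matrixAbs X).PosSemidef := by
    rw [matrixAbs_eq_cfcAbs]; exact nonneg_iff_posSemidef.mp (CFC.abs_nonneg X)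
  have key := four_mul_re_trace_conjTranspose_mul_le (hpsd A) (hpsd B) (by rw [← sq, hsq])
    (by rw [← sq, hsq]) t⁻¹
  have hAB : ((A + B)ᴴ * (A + B)).trace.re =
      (Aᴴ * A).trace.re + (Bᴴ * B).trace.re + 2 * (Aᴴ * B).trace.re := by
    have hBA := re_trace_conjTranspose_mul_comm B A
    simp only [RCLike.re_to_complex] at hBA
    simp only [conjTranspose_add, add_mul, mul_add, trace_add, Complex.add_re, hBA]
    ring
  have hnonneg : 0 ≤ ((A + B)ᴴ * (A + B)).trace.re := by
    simpa using re_trace_conjTranspose_mul_self_nonneg (A + B)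
  rw [frobeniusNorm', hsq, Real.sq_sqrt hnonneg, hAB, hsq, hsq, trace_add, trace_add,
    trace_mul_comm (matrixAbs B), Complex.add_re, Complex.add_re]
  simp only [RCLike.re_to_complex] at key
  field_simp at key ⊢
  linarith
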